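/- Suppose positive integers rᵢ, xᵢ, yᵢ (i = 1,2,3) satisfy rᵢ² = 2xᵢyᵢ, together with the cyclic gluing relations r₁+x₁ = r₃+y₃, r₂+x₂ = r₃+x₃, and r₁+y₁ = r₂+y₂. If additionally r₁+x₁ = r₂+x₂ (symmetric closure), then a contradiction follows; i.e., no such configuration exists. -/

import Mathlib

/-!
Symmetric closure together with the two gluing relations at face 3 forces `x₃ = y₃`, so face 3
would be an isosceles right triangle with integer sides: `r₃² = 2 x₃²`, contradicting the
irrationality of `√2`.
-/

theorem Int.eq_zero_of_sq_eq_two_mul_sq {r x : ℤ} (h : r ^ 2 = 2 * x ^ 2) : x = 0 := by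
  by_contra hx
  have hsq : IsSquare ((2 : ℕ) : ℚ) :=
    ⟨r / x, by field_simp; exact_mod_cast h.symm⟩
  exact Nat.prime_two.not_isSquare (Rat.isSquare_natCast_iff.mp hsq)

theorem stmt_11_general (r₁ x₁ r₂ x₂ r₃ x₃ y₃ : ℤ)
    (hx₃ : 0 < x₃)
    (h3 : r₃ ^ 2 = 2 * (x₃ * y₃))
    (e1 : r₁ + x₁ = r₃ + y₃) (e2 : r₂ + x₂ = r₃ + x₃)
    (sym : r₁ + x₁ = r₂ + x₂) :
    False := by
  have hxy : x₃ = y₃ := by omega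
  have hx₃_zero : x₃ = 0 := Int.eq_zero_of_sq_eq_two_mul_sq (r := r₃) (by rw [h3, ← hxy]; ring)
  omega

theorem stmt_11 (r₁ x₁ y₁ r₂ x₂ y₂ r₃ x₃ y₃ : ℤ)
    (hr₁ : 0 < r₁) (hx₁ : 0 < x₁) (hy₁ : 0 < y₁)
    (hr₂ : 0 < r₂) (hx₂ : 0 < x₂) (hy₂ : 0 < y₂)
    (hr₃ : 0 < r₃) (hx₃ : 0 < x₃) (hy₃ : 0 < y₃)
    (h1 : r₁ ^ 2 = 2 * (x₁ * y₁)) (h2 : r₂ ^ 2 = 2 * (x₂ * y₂))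
    (h3 : r₃ ^ 2 = 2 * (x₃ * y₃))
    (e1 : r₁ + x₁ = r₃ + y₃) (e2 : r₂ + x₂ = r₃ + x₃)
    (e3 : r₁ + y₁ = r₂ + y₂)
    (sym : r₁ + x₁ = r₂ + x₂) :
    False :=
  stmt_11_general r₁ x₁ r₂ x₂ r₃ x₃ y₃ hx₃ h3 e1 e2 sym
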